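/- arXiv:2501.00493 — 8 statements merged into one kernel-verified Lean document; each statement's English description precedes it below -/
import Mathlib

section
/- Let B be a residuated Boolean algebra, F and G proper filters, and H a prime filter such that x ⊗ y ∈ H for all x ∈ F and y ∈ G. Then there exists a prime filter F' with F ⊆ F' such that x ⊗ y ∈ H for all x ∈ F' and y ∈ G. -/
/-- A filter on a lattice: nonempty, upward-closed, meet-closed. -/
def IsLatFilter {L : Type*} [Lattice L] (F : Set L) : Prop :=
  F.Nonempty ∧ (∀ a b : L, a ∈ F → a ≤ b → b ∈ F) ∧ (∀ a b : L, a ∈ F → b ∈ F → a ⊓ b ∈ F)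

/-- A prime filter: a proper filter such that `a ⊔ b ∈ F` implies `a ∈ F` or `b ∈ F`. -/
def IsPrimeLatFilter {L : Type*} [Lattice L] (F : Set L) : Prop :=
  IsLatFilter F ∧ F ≠ Set.univ ∧ ∀ a b : L, a ⊔ b ∈ F → a ∈ F ∨ b ∈ F

/-- A residuated Boolean algebra: a Boolean algebra with a unital product `*`
and residuals `ldiv` (⊸) and `rdiv` (⟜) satisfying the residuation law. -/
class ResiduatedBooleanAlgebra (B : Type*) extends BooleanAlgebra B, Mul B, One B where
  ldiv : B → B → B
  rdiv : B → B → B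
  one_mul : ∀ a : B, 1 * a = a
  mul_one : ∀ a : B, a * 1 = a
  res_ldiv : ∀ a b c : B, a * b ≤ c ↔ b ≤ ldiv a c
  res_rdiv : ∀ a b c : B, a * b ≤ c ↔ a ≤ rdiv c b

namespace RBAaux
open ResiduatedBooleanAlgebra

variable {B : Type*} [ResiduatedBooleanAlgebra B]

lemma mul_le_mul' {a a' b b' : B} (ha : a ≤ a') (hb : b ≤ b') : a * b ≤ a' * b' := by
  have h1 : a' * b ≤ a' * b' :=
    (res_ldiv a' b (a' * b')).mpr (le_trans hb ((res_ldiv a' b' (a' * b')).mp le_rfl))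
  exact (res_rdiv a b (a' * b')).mpr (le_trans ha ((res_rdiv a' b (a' * b')).mp h1))

lemma sup_mul' (a b c : B) : (a ⊔ b) * c = a * c ⊔ b * c := by
  apply le_antisymm
  · refine (res_rdiv _ _ _).mpr (sup_le ?_ ?_)
    · exact (res_rdiv a c (a * c ⊔ b * c)).mp le_sup_left
    · exact (res_rdiv b c (a * c ⊔ b * c)).mp le_sup_right
  · exact sup_le (mul_le_mul' le_sup_left le_rfl) (mul_le_mul' le_sup_right le_rfl)

lemma bot_mul' (c : B) : (⊥ : B) * c = ⊥ :=
  le_antisymm ((res_rdiv _ _ _).mpr bot_le) bot_le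

end RBAaux

open RBAaux in
theorem product_one_prime {B : Type*} [ResiduatedBooleanAlgebra B]
    (F G H : Set B) (hF : IsLatFilter F) (hFp : F ≠ Set.univ)
    (hG : IsLatFilter G) (hGp : G ≠ Set.univ)
    (hH : IsPrimeLatFilter H)
    (hFG : ∀ x ∈ F, ∀ y ∈ G, x * y ∈ H) :
    ∃ F' : Set B, IsPrimeLatFilter F' ∧ F ⊆ F' ∧ ∀ x ∈ F', ∀ y ∈ G, x * y ∈ H := by
  classical
  obtain ⟨⟨yG, hyG⟩, hGup, hGmeet⟩ := hG
  have hHup := hH.1.2.1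
  have hHprime := hH.2.2
  have hHbot : (⊥ : B) ∉ H := by
    intro hb
    apply hH.2.1
    ext z; simp only [Set.mem_univ, iff_true]
    exact hHup ⊥ z hb bot_le
  set S : Set (Set B) := {K | IsLatFilter K ∧ F ⊆ K ∧ ∀ x ∈ K, ∀ y ∈ G, x * y ∈ H} with hS
  have hFS : F ∈ S := ⟨hF, subset_rfl, hFG⟩
  obtain ⟨m, hFm, hmS, hmax⟩ := zorn_subset_nonempty S (fun c hcS hchain hcne => by
    refine ⟨⋃₀ c, ⟨⟨?_, ?_, ?_⟩, ?_, ?_⟩, fun s hs => Set.subset_sUnion_of_mem hs⟩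
    · obtain ⟨K, hK⟩ := hcne
      obtain ⟨x, hx⟩ := (hcS hK).1.1
      exact ⟨x, K, hK, hx⟩
    · rintro a b ⟨K, hK, haK⟩ hab
      exact ⟨K, hK, (hcS hK).1.2.1 a b haK hab⟩
    · rintro a b ⟨K, hK, haK⟩ ⟨L, hL, hbL⟩
      rcases hchain.total hK hL with h | h
      · exact ⟨L, hL, (hcS hL).1.2.2 a b (h haK) hbL⟩
      · exact ⟨K, hK, (hcS hK).1.2.2 a b haK (h hbL)⟩
    · obtain ⟨K, hK⟩ := hcne
      exact (hcS hK).2.1.trans (Set.subset_sUnion_of_mem hK)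
    · rintro x ⟨K, hK, hxK⟩ y hy
      exact (hcS hK).2.2 x hxK y hy) F hFS
  obtain ⟨hmFil, hFsub, hmP⟩ := hmS
  have hmne : m ≠ Set.univ := by
    intro h
    exact hHbot (by simpa [bot_mul'] using hmP ⊥ (h ▸ Set.mem_univ ⊥) yG hyG)
  refine ⟨m, ⟨hmFil, hmne, ?_⟩, hFsub, hmP⟩
  intro a b hab
  by_contra hcon
  push_neg at hcon
  obtain ⟨ha, hb⟩ := hcon
  -- filter generated by m and an element e, failing property, gives witnesses
  have key : ∀ e : B, e ∉ m → ∃ f ∈ m, ∃ y ∈ G, (f ⊓ e) * y ∉ H := by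
    intro e he
    set Ke : Set B := {c | ∃ f ∈ m, f ⊓ e ≤ c} with hKe
    have hKeFil : IsLatFilter Ke := by
      refine ⟨⟨e, ?_⟩, ?_, ?_⟩
      · obtain ⟨f, hf⟩ := hmFil.1
        exact ⟨f, hf, inf_le_right⟩
      · rintro x y ⟨f, hf, hfx⟩ hxy
        exact ⟨f, hf, hfx.trans hxy⟩
      · rintro x y ⟨f, hf, hfx⟩ ⟨g, hg, hgy⟩
        refine ⟨f ⊓ g, hmFil.2.2 f g hf hg, le_inf ?_ ?_⟩
        · exact le_trans (inf_le_inf_right e inf_le_left) hfx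
        · exact le_trans (inf_le_inf_right e inf_le_right) hgy
    have hmKe : m ⊆ Ke := fun x hx => ⟨x, hx, inf_le_left⟩
    have heKe : e ∈ Ke := by
      obtain ⟨f, hf⟩ := hmFil.1
      exact ⟨f, hf, inf_le_right⟩
    have hne : Ke ∉ S := by
      intro hKS
      exact he (hmax hKS hmKe heKe)
    have : ¬ ∀ x ∈ Ke, ∀ y ∈ G, x * y ∈ H := fun h =>
      hne ⟨hKeFil, hFsub.trans hmKe, h⟩
    push_neg at this
    obtain ⟨c, ⟨f, hf, hfc⟩, y, hy, hcy⟩ := this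
    exact ⟨f, hf, y, hy, fun hmem =>
      hcy (hHup _ _ hmem (mul_le_mul' hfc le_rfl))⟩
  obtain ⟨f, hf, y, hy, hfa⟩ := key a ha
  obtain ⟨g, hg, z, hz, hgb⟩ := key b hb
  set e := f ⊓ g
  set w := y ⊓ z
  have hew : (e ⊓ (a ⊔ b)) * w ∈ H :=
    hmP _ (hmFil.2.2 _ _ (hmFil.2.2 f g hf hg) hab) w (hGmeet y z hy hz)
  have hdist : (e ⊓ (a ⊔ b)) * w = (e ⊓ a) * w ⊔ (e ⊓ b) * w := by
    rw [inf_sup_left, sup_mul']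
  rw [hdist] at hew
  rcases hHprime _ _ hew with h | h
  · exact hfa (hHup _ _ h (mul_le_mul' (inf_le_inf_right a inf_le_left) inf_le_left))
  · exact hgb (hHup _ _ h (mul_le_mul' (inf_le_inf_right b inf_le_right) inf_le_right))
end

section
/- Let B be a residuated Boolean algebra, F and G proper filters, and H a prime filter such that x ⊗ y ∈ H for all x ∈ F, y ∈ G. Then there exist prime filters F' ⊇ F and G' ⊇ G such that x ⊗ y ∈ H for all x ∈ F' and y ∈ G'. -/
section Aux

variable {B : Type*} [ResiduatedBooleanAlgebra B]

open ResiduatedBooleanAlgebra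

lemma rba_mul_le_mul_left {a b : B} (c : B) (h : a ≤ b) : a * c ≤ b * c :=
  (res_rdiv a c (b * c)).mpr (le_trans h ((res_rdiv b c (b * c)).mp le_rfl))

lemma rba_mul_le_mul_right (c : B) {a b : B} (h : a ≤ b) : c * a ≤ c * b :=
  (res_ldiv c a (c * b)).mpr (le_trans h ((res_ldiv c b (c * b)).mp le_rfl))

lemma rba_sup_mul (a b c : B) : (a ⊔ b) * c = a * c ⊔ b * c := by
  apply le_antisymm
  · exact (res_rdiv _ _ _).mpr (sup_le ((res_rdiv _ _ _).mp le_sup_left)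
      ((res_rdiv _ _ _).mp le_sup_right))
  · exact sup_le (rba_mul_le_mul_left c le_sup_left) (rba_mul_le_mul_left c le_sup_right)

lemma rba_mul_sup (a b c : B) : c * (a ⊔ b) = c * a ⊔ c * b := by
  apply le_antisymm
  · exact (res_ldiv _ _ _).mpr (sup_le ((res_ldiv _ _ _).mp le_sup_left)
      ((res_ldiv _ _ _).mp le_sup_right))
  · exact sup_le (rba_mul_le_mul_right c le_sup_left) (rba_mul_le_mul_right c le_sup_right)

lemma rba_bot_mul (a : B) : (⊥ : B) * a = ⊥ :=
  le_antisymm ((res_rdiv _ _ _).mpr bot_le) bot_le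

lemma rba_mul_bot (a : B) : a * (⊥ : B) = ⊥ :=
  le_antisymm ((res_ldiv _ _ _).mpr bot_le) bot_le

/-- Abstract prime filter extension lemma. -/
lemma exists_prime_ext (K : Set B) (hK : IsLatFilter K) (Q : B → Prop)
    (hQK : ∀ x ∈ K, Q x)
    (hmono : ∀ x y : B, x ≤ y → Q x → Q y)
    (hbot : ¬ Q ⊥)
    (hsup : ∀ a b : B, Q (a ⊔ b) → Q a ∨ Q b) :
    ∃ K' : Set B, IsPrimeLatFilter K' ∧ K ⊆ K' ∧ ∀ x ∈ K', Q x := by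
  obtain ⟨hKne, hKup, hKmeet⟩ := hK
  set S : Set (Set B) := {K' | IsLatFilter K' ∧ ∀ x ∈ K', Q x} with hS
  have hKS : K ∈ S := ⟨⟨hKne, hKup, hKmeet⟩, hQK⟩
  have hchainub : ∀ c ⊆ S, IsChain (· ⊆ ·) c → c.Nonempty → ∃ ub ∈ S, ∀ s ∈ c, s ⊆ ub := by
    intro c hcS hchain hcne
    refine ⟨⋃₀ c, ⟨⟨?_, ?_, ?_⟩, ?_⟩, fun s hs => Set.subset_sUnion_of_mem hs⟩
    · obtain ⟨s, hs⟩ := hcne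
      obtain ⟨x, hx⟩ := (hcS hs).1.1
      exact ⟨x, s, hs, hx⟩
    · rintro a b ⟨s, hs, has⟩ hab
      exact ⟨s, hs, (hcS hs).1.2.1 a b has hab⟩
    · rintro a b ⟨s, hs, has⟩ ⟨t, ht, hbt⟩
      rcases hchain.total hs ht with hst | hts
      · exact ⟨t, ht, (hcS ht).1.2.2 a b (hst has) hbt⟩
      · exact ⟨s, hs, (hcS hs).1.2.2 a b has (hts hbt)⟩
    · rintro x ⟨s, hs, hxs⟩
      exact (hcS hs).2 x hxs
  obtain ⟨m, hKm, hmS, hmax⟩ := zorn_subset_nonempty S hchainub K hKS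
  obtain ⟨⟨hmne, hmup, hmmeet⟩, hmQ⟩ := hmS
  refine ⟨m, ⟨⟨hmne, hmup, hmmeet⟩, ?_, ?_⟩, hKm, hmQ⟩
  · intro h
    exact hbot (hmQ ⊥ (h ▸ Set.mem_univ ⊥))
  · intro a b hab
    by_contra hcon
    push_neg at hcon
    obtain ⟨ha, hb⟩ := hcon
    -- the filter generated by m and an element e
    have key : ∀ e : B, e ∉ m → ∃ x ∈ m, ¬ Q (x ⊓ e) := by
      intro e he
      by_contra hall
      push_neg at hall
      set me : Set B := {z | ∃ x ∈ m, x ⊓ e ≤ z} with hme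
      have hmeS : me ∈ S := by
        refine ⟨⟨?_, ?_, ?_⟩, ?_⟩
        · obtain ⟨x, hx⟩ := hmne
          exact ⟨x ⊓ e, x, hx, le_rfl⟩
        · rintro u v ⟨x, hx, hxu⟩ huv
          exact ⟨x, hx, le_trans hxu huv⟩
        · rintro u v ⟨x, hx, hxu⟩ ⟨y, hy, hyv⟩
          exact ⟨x ⊓ y, hmmeet x y hx hy,
            le_inf (le_trans (inf_le_inf_right e inf_le_left) hxu)
              (le_trans (inf_le_inf_right e inf_le_right) hyv)⟩
        · rintro z ⟨x, hx, hxz⟩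
          exact hmono _ _ hxz (hall x hx)
      have hsub : m ⊆ me := fun z hz => ⟨z, hz, inf_le_left⟩
      have : me ⊆ m := hmax hmeS hsub
      have hem : e ∈ me := by
        obtain ⟨x, hx⟩ := hmne
        exact ⟨x, hx, inf_le_right⟩
      exact he (this hem)
    obtain ⟨x₁, hx₁, hq₁⟩ := key a ha
    obtain ⟨x₂, hx₂, hq₂⟩ := key b hb
    set x := x₁ ⊓ x₂ with hx
    have hxm : x ∈ m := hmmeet _ _ hx₁ hx₂
    have hqa : ¬ Q (x ⊓ a) := fun h => hq₁ (hmono _ _ (inf_le_inf_right a inf_le_left) h)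
    have hqb : ¬ Q (x ⊓ b) := fun h => hq₂ (hmono _ _ (inf_le_inf_right b inf_le_right) h)
    have hQs : Q (x ⊓ (a ⊔ b)) := hmQ _ (hmmeet _ _ hxm hab)
    rw [inf_sup_left] at hQs
    rcases hsup _ _ hQs with h | h
    · exact hqa h
    · exact hqb h

end Aux

theorem product_two_prime {B : Type*} [ResiduatedBooleanAlgebra B]
    (F G H : Set B) (hF : IsLatFilter F) (hFp : F ≠ Set.univ)
    (hG : IsLatFilter G) (hGp : G ≠ Set.univ)
    (hH : IsPrimeLatFilter H)
    (hFG : ∀ x ∈ F, ∀ y ∈ G, x * y ∈ H) :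
    ∃ F' G' : Set B, IsPrimeLatFilter F' ∧ IsPrimeLatFilter G' ∧ F ⊆ F' ∧ G ⊆ G' ∧
      ∀ x ∈ F', ∀ y ∈ G', x * y ∈ H := by
  obtain ⟨⟨hHne, hHup, hHmeet⟩, hHp, hHprime⟩ := hH
  have hbotH : (⊥ : B) ∉ H := by
    intro h
    apply hHp
    ext z
    simp only [Set.mem_univ, iff_true]
    exact hHup ⊥ z h bot_le
  -- Step 1: extend F
  obtain ⟨F', hF'p, hFF', hF'Q⟩ := exists_prime_ext F hF (fun x => ∀ y ∈ G, x * y ∈ H)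
    (fun x hx => hFG x hx)
    (fun x x' hxx' hq y hy => hHup _ _ (hq y hy) (rba_mul_le_mul_left y hxx'))
    (by
      intro h
      obtain ⟨y, hy⟩ := hG.1
      exact hbotH (rba_bot_mul y ▸ h y hy))
    (by
      intro a b hq
      by_contra hc
      rw [not_or] at hc
      obtain ⟨hna, hnb⟩ := hc
      simp only [not_forall, Classical.not_imp] at hna hnb
      obtain ⟨y₁, hy₁, hn₁⟩ := hna
      obtain ⟨y₂, hy₂, hn₂⟩ := hnb
      have hy : y₁ ⊓ y₂ ∈ G := hG.2.2 _ _ hy₁ hy₂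
      have h1 : a * (y₁ ⊓ y₂) ∉ H :=
        fun h => hn₁ (hHup _ _ h (rba_mul_le_mul_right a inf_le_left))
      have h2 : b * (y₁ ⊓ y₂) ∉ H :=
        fun h => hn₂ (hHup _ _ h (rba_mul_le_mul_right b inf_le_right))
      have := hq (y₁ ⊓ y₂) hy
      rw [rba_sup_mul] at this
      rcases hHprime _ _ this with h | h
      · exact h1 h
      · exact h2 h)
  -- Step 2: extend G
  obtain ⟨G', hG'p, hGG', hG'Q⟩ := exists_prime_ext G hG (fun y => ∀ x ∈ F', x * y ∈ H)
    (fun y hy x hx => hF'Q x hx y hy)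
    (fun y y' hyy' hq x hx => hHup _ _ (hq x hx) (rba_mul_le_mul_right x hyy'))
    (by
      intro h
      obtain ⟨x, hx⟩ := hF'p.1.1
      exact hbotH (rba_mul_bot x ▸ h x hx))
    (by
      intro a b hq
      by_contra hc
      rw [not_or] at hc
      obtain ⟨hna, hnb⟩ := hc
      simp only [not_forall, Classical.not_imp] at hna hnb
      obtain ⟨x₁, hx₁, hn₁⟩ := hna
      obtain ⟨x₂, hx₂, hn₂⟩ := hnb
      have hx : x₁ ⊓ x₂ ∈ F' := hF'p.1.2.2 _ _ hx₁ hx₂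
      have h1 : (x₁ ⊓ x₂) * a ∉ H :=
        fun h => hn₁ (hHup _ _ h (rba_mul_le_mul_left a inf_le_left))
      have h2 : (x₁ ⊓ x₂) * b ∉ H :=
        fun h => hn₂ (hHup _ _ h (rba_mul_le_mul_left b inf_le_right))
      have := hq (x₁ ⊓ x₂) hx
      rw [rba_mul_sup] at this
      rcases hHprime _ _ this with h | h
      · exact h1 h
      · exact h2 h)
  exact ⟨F', G', hF'p, hG'p, hFF', hGG', fun x hx y hy => hG'Q y hy x hx⟩
end

section
/- Let B be a residuated Boolean algebra and F, G, H prime filters. The following are equivalent: (i) for all a, b, if a ∈ F and b ∈ G then a ⊗ b ∈ H; (ii) for all a, b, if a ∈ F and a ⊸ b ∈ G then b ∈ H; (iii) for all a, b, if b ⟜ a ∈ F and a ∈ G then b ∈ H. -/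
theorem r_eqv {B : Type*} [ResiduatedBooleanAlgebra B]
    (F G H : Set B) (hF : IsPrimeLatFilter F) (hG : IsPrimeLatFilter G)
    (hH : IsPrimeLatFilter H) :
    ((∀ a b : B, a ∈ F → b ∈ G → a * b ∈ H) ↔
      (∀ a b : B, a ∈ F → ResiduatedBooleanAlgebra.ldiv a b ∈ G → b ∈ H)) ∧
    ((∀ a b : B, a ∈ F → b ∈ G → a * b ∈ H) ↔
      (∀ a b : B, ResiduatedBooleanAlgebra.rdiv b a ∈ F → a ∈ G → b ∈ H)) := by
  obtain ⟨⟨_, hHup, _⟩, _, _⟩ := hH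
  constructor
  · constructor
    · intro h a b ha hg
      exact hHup _ b (h a _ ha hg)
        ((ResiduatedBooleanAlgebra.res_ldiv a _ b).mpr le_rfl)
    · intro h a b ha hb
      exact h a (a * b) ha
        (((hG.1.2.1) b _ hb) ((ResiduatedBooleanAlgebra.res_ldiv a b (a*b)).mp le_rfl))
  · constructor
    · intro h a b ha hg
      exact hHup _ b (h _ a ha hg)
        ((ResiduatedBooleanAlgebra.res_rdiv _ a b).mpr le_rfl)
    · intro h a b ha hb
      exact h b (a * b)
        (((hF.1.2.1) a _ ha) ((ResiduatedBooleanAlgebra.res_rdiv a b (a*b)).mp le_rfl)) hb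
end

section
/- Let B be a residuated Boolean algebra and H a prime filter with a ⊗ b ∈ H. Then there exist prime filters F and G with a ∈ F, b ∈ G, and such that x ⊗ y ∈ H for all x ∈ F, y ∈ G. -/
namespace RBAproof

open ResiduatedBooleanAlgebra

variable {B : Type*} [ResiduatedBooleanAlgebra B]

lemma rmul_mono {x x' : B} (h : x ≤ x') (y : B) : x * y ≤ x' * y :=
  (res_rdiv x y (x' * y)).mpr (h.trans ((res_rdiv x' y (x' * y)).mp le_rfl))

lemma lmul_mono (x : B) {y y' : B} (h : y ≤ y') : x * y ≤ x * y' :=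
  (res_ldiv x y (x * y')).mpr (h.trans ((res_ldiv x y' (x * y')).mp le_rfl))

lemma rmul_sup_le (x y z : B) : (x ⊔ y) * z ≤ x * z ⊔ y * z :=
  (res_rdiv _ _ _).mpr (sup_le ((res_rdiv _ _ _).mp le_sup_left)
    ((res_rdiv _ _ _).mp le_sup_right))

lemma lmul_sup_le (x y z : B) : x * (y ⊔ z) ≤ x * y ⊔ x * z :=
  (res_ldiv _ _ _).mpr (sup_le ((res_ldiv _ _ _).mp le_sup_left)
    ((res_ldiv _ _ _).mp le_sup_right))

lemma bot_mul' (x : B) : (⊥ : B) * x = ⊥ :=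
  le_bot_iff.mp ((res_rdiv _ _ _).mpr bot_le)

lemma mul_bot' (x : B) : x * (⊥ : B) = ⊥ :=
  le_bot_iff.mp ((res_ldiv _ _ _).mpr bot_le)

lemma split_eq (z c : B) : z ⊓ c ⊔ z ⊓ cᶜ = z := by
  rw [← inf_sup_left, sup_compl_eq_top, inf_top_eq]

/-- Key extension lemma: any element of a suitable "open" set `D` lies in a
prime filter contained in `D`. -/
lemma exists_prime_sub (D : Set B)
    (hup : ∀ u v : B, u ∈ D → u ≤ v → v ∈ D)
    (hsplit : ∀ z c : B, z ∈ D → z ⊓ c ∈ D ∨ z ⊓ cᶜ ∈ D)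
    (hbot : (⊥ : B) ∉ D) (d : B) (hd : d ∈ D) :
    ∃ F : Set B, IsPrimeLatFilter F ∧ d ∈ F ∧ F ⊆ D := by
  set S : Set (Set B) := {F | d ∈ F ∧ IsLatFilter F ∧ F ⊆ D} with hS
  have hchain : ∀ c ⊆ S, IsChain (· ⊆ ·) c → c.Nonempty →
      ∃ ub ∈ S, ∀ s ∈ c, s ⊆ ub := by
    intro c hcS hchain ⟨t, ht⟩
    refine ⟨⋃₀ c, ⟨⟨t, ht, (hcS ht).1⟩, ⟨⟨d, t, ht, (hcS ht).1⟩, ?_, ?_⟩, ?_⟩,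
      fun s hs => Set.subset_sUnion_of_mem hs⟩
    · rintro u v ⟨s, hs, hu⟩ huv
      exact ⟨s, hs, (hcS hs).2.1.2.1 u v hu huv⟩
    · rintro u v ⟨s, hs, hu⟩ ⟨s', hs', hv⟩
      rcases hchain.total hs hs' with h | h
      · exact ⟨s', hs', (hcS hs').2.1.2.2 u v (h hu) hv⟩
      · exact ⟨s, hs, (hcS hs).2.1.2.2 u v hu (h hv)⟩
    · rintro u ⟨s, hs, hu⟩
      exact (hcS hs).2.2 hu
  obtain ⟨M, hdM, hMS, hMmax⟩ := zorn_subset_nonempty S hchain {x | d ≤ x}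
    ⟨le_rfl, ⟨⟨d, le_rfl⟩, fun u v hu huv => hu.trans huv,
      fun u v hu hv => le_inf hu hv⟩, fun u hu => hup d u hd hu⟩
  have hMD : M ⊆ D := hMS.2.2
  have hMfil : IsLatFilter M := hMS.2.1
  have hdin : d ∈ M := hMS.1
  -- M is an ultrafilter: for every c, c ∈ M or cᶜ ∈ M
  have hultra : ∀ c : B, c ∈ M ∨ cᶜ ∈ M := by
    intro c
    by_contra hcon
    push_neg at hcon
    -- the filter generated by M and e
    set ext : B → Set B := fun e => {z | ∃ x ∈ M, x ⊓ e ≤ z} with hext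
    have hextfil : ∀ e : B, d ∈ ext e ∧ IsLatFilter (ext e) := by
      intro e
      refine ⟨⟨d, hdin, inf_le_left⟩, ⟨d, d, hdin, inf_le_left⟩, ?_, ?_⟩
      · rintro u v ⟨x, hx, hxu⟩ huv; exact ⟨x, hx, hxu.trans huv⟩
      · rintro u v ⟨x, hx, hxu⟩ ⟨y, hy, hyv⟩
        exact ⟨x ⊓ y, hMfil.2.2 x y hx hy, by
          calc x ⊓ y ⊓ e ≤ (x ⊓ e) ⊓ (y ⊓ e) := by
                exact le_inf (inf_le_inf_right e inf_le_left)
                  (inf_le_inf_right e inf_le_right)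
            _ ≤ u ⊓ v := inf_le_inf hxu hyv⟩
    have key : ∀ e : B, ext e ⊆ D → e ∈ M := by
      intro e hsubD
      have hMe : M ⊆ ext e := fun x hx => ⟨x, hx, inf_le_left⟩
      have : ext e = M := (hMmax ⟨(hextfil e).1, (hextfil e).2, hsubD⟩ hMe).antisymm hMe
      exact this ▸ (⟨d, hdin, inf_le_right⟩ : e ∈ ext e)
    -- since c ∉ M, cᶜ ∉ M, neither extension is contained in D
    have hnot : ∀ e : B, e ∉ M → ∃ z ∈ M, z ⊓ e ∉ D := by
      intro e heM
      have : ¬ ext e ⊆ D := fun h => heM (key e h)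
      rw [Set.not_subset] at this
      obtain ⟨w, ⟨x, hx, hxw⟩, hwD⟩ := this
      exact ⟨x, hx, fun h => hwD (hup _ _ h hxw)⟩
    obtain ⟨z₁, hz₁, hz₁D⟩ := hnot c hcon.1
    obtain ⟨z₂, hz₂, hz₂D⟩ := hnot cᶜ hcon.2
    have hz : z₁ ⊓ z₂ ∈ M := hMfil.2.2 _ _ hz₁ hz₂
    rcases hsplit (z₁ ⊓ z₂) c (hMD hz) with h | h
    · exact hz₁D (hup _ _ h (inf_le_inf_right c inf_le_left))
    · exact hz₂D (hup _ _ h (inf_le_inf_right cᶜ inf_le_right))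
  -- M is prime
  have hbotM : (⊥ : B) ∉ M := fun h => hbot (hMD h)
  refine ⟨M, ⟨hMfil, ?_, ?_⟩, hdin, hMD⟩
  · intro h
    exact hbotM (h ▸ Set.mem_univ ⊥)
  · intro u v huv
    by_contra hcon
    push_neg at hcon
    have hu : uᶜ ∈ M := (hultra u).resolve_left hcon.1
    have hv : vᶜ ∈ M := (hultra v).resolve_left hcon.2
    have : (u ⊔ v) ⊓ (uᶜ ⊓ vᶜ) ∈ M := hMfil.2.2 _ _ huv (hMfil.2.2 _ _ hu hv)
    rw [← compl_sup, inf_compl_eq_bot] at this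
    exact hbotM this

end RBAproof

theorem r_exist_prod {B : Type*} [ResiduatedBooleanAlgebra B]
    (H : Set B) (hH : IsPrimeLatFilter H) (a b : B) (hab : a * b ∈ H) :
    ∃ F G : Set B, IsPrimeLatFilter F ∧ IsPrimeLatFilter G ∧ a ∈ F ∧ b ∈ G ∧
      ∀ x ∈ F, ∀ y ∈ G, x * y ∈ H := by
  open RBAproof in
  obtain ⟨hHfil, hHproper, hHprime⟩ := hH
  have hbotH : (⊥ : B) ∉ H := by
    intro h
    exact hHproper (Set.eq_univ_of_forall fun x => hHfil.2.1 ⊥ x h bot_le)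
  -- First prime filter F containing a, with x * b ∈ H for all x ∈ F
  obtain ⟨F, hFprime, haF, hFD⟩ := exists_prime_sub (B := B) {x | x * b ∈ H}
    (fun u v hu huv => hHfil.2.1 _ _ hu (rmul_mono huv b))
    (by
      intro z c hz
      have h1 : z * b ≤ (z ⊓ c) * b ⊔ (z ⊓ cᶜ) * b := by
        calc z * b = (z ⊓ c ⊔ z ⊓ cᶜ) * b := by rw [split_eq]
          _ ≤ _ := rmul_sup_le _ _ _
      exact hHprime _ _ (hHfil.2.1 _ _ hz h1))
    (by simpa [bot_mul'] using hbotH) a hab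
  -- Second prime filter G containing b, with x * y ∈ H for all x ∈ F, y ∈ G
  obtain ⟨G, hGprime, hbG, hGD⟩ := exists_prime_sub (B := B) {y | ∀ x ∈ F, x * y ∈ H}
    (fun u v hu huv x hx => hHfil.2.1 _ _ (hu x hx) (lmul_mono x huv))
    (by
      intro z c hz
      by_contra hcon
      simp only [Set.mem_setOf_eq, not_or, not_forall] at hcon
      obtain ⟨⟨x₁, hx₁, hx₁H⟩, ⟨x₂, hx₂, hx₂H⟩⟩ := hcon
      have hx : x₁ ⊓ x₂ ∈ F := hFprime.1.2.2 _ _ hx₁ hx₂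
      have h1 : (x₁ ⊓ x₂) * z ≤ (x₁ ⊓ x₂) * (z ⊓ c) ⊔ (x₁ ⊓ x₂) * (z ⊓ cᶜ) := by
        calc (x₁ ⊓ x₂) * z = (x₁ ⊓ x₂) * (z ⊓ c ⊔ z ⊓ cᶜ) := by rw [split_eq]
          _ ≤ _ := lmul_sup_le _ _ _
      rcases hHprime _ _ (hHfil.2.1 _ _ (hz _ hx) h1) with h | h
      · exact hx₁H (hHfil.2.1 _ _ h (rmul_mono inf_le_left _))
      · exact hx₂H (hHfil.2.1 _ _ h (rmul_mono inf_le_right _)))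
    (by
      intro h
      obtain ⟨x, hx⟩ := hFprime.1.1
      exact hbotH (by simpa [mul_bot'] using h x hx))
    b (fun x hx => hFD hx)
  exact ⟨F, G, hFprime, hGprime, haF, hbG, fun x hx y hy => hGD hy x hx⟩
end

section
/- Let B be a residuated Boolean algebra and G a prime filter with a ⊸ b ∉ G. Then there exist prime filters F and H with a ∈ F, b ∉ H, and such that x ⊗ y ∈ H for all x ∈ F, y ∈ G. -/
namespace RBAProof

open ResiduatedBooleanAlgebra

variable {B : Type*} [ResiduatedBooleanAlgebra B]

lemma mul_le_mul' {x x' y y' : B} (hx : x ≤ x') (hy : y ≤ y') : x * y ≤ x' * y' := by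
  have h1 : x' * y ≤ x' * y' := by
    rw [res_ldiv]
    exact hy.trans ((res_ldiv x' y' (x' * y')).mp le_rfl)
  refine le_trans ?_ h1
  rw [res_rdiv]
  exact hx.trans ((res_rdiv x' y (x' * y)).mp le_rfl)

lemma sup_mul' (x y z : B) : (x ⊔ y) * z = x * z ⊔ y * z := by
  apply le_antisymm
  · rw [res_rdiv]
    exact sup_le ((res_rdiv x z _).mp le_sup_left) ((res_rdiv y z _).mp le_sup_right)
  · exact sup_le (mul_le_mul' le_sup_left le_rfl) (mul_le_mul' le_sup_right le_rfl)

lemma bot_mul' (z : B) : (⊥ : B) * z = ⊥ :=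
  le_antisymm ((res_rdiv ⊥ z ⊥).mpr bot_le) bot_le

/-- Union of a nonempty chain of filters (each satisfying an extra superset-stable
property packaged in S) -- we just inline chain arguments instead. -/

lemma chain_union_filter {L : Type*} [Lattice L] {c : Set (Set L)}
    (hchain : IsChain (· ⊆ ·) c) (hne : c.Nonempty)
    (hf : ∀ P ∈ c, IsLatFilter P) : IsLatFilter (⋃₀ c) := by
  obtain ⟨P0, hP0⟩ := hne
  refine ⟨?_, ?_, ?_⟩
  · obtain ⟨x, hx⟩ := (hf P0 hP0).1
    exact ⟨x, P0, hP0, hx⟩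
  · rintro u v ⟨P, hP, hu⟩ huv
    exact ⟨P, hP, (hf P hP).2.1 u v hu huv⟩
  · rintro u v ⟨P, hP, hu⟩ ⟨Q, hQ, hv⟩
    rcases hchain.total hP hQ with h | h
    · exact ⟨Q, hQ, (hf Q hQ).2.2 u v (h hu) hv⟩
    · exact ⟨P, hP, (hf P hP).2.2 u v hu (h hv)⟩

/-- The filter generated by M and x. -/
lemma gen_filter {L : Type*} [Lattice L] {M : Set L} (hM : IsLatFilter M) (x : L) :
    IsLatFilter {z | ∃ m ∈ M, m ⊓ x ≤ z} := by
  obtain ⟨m0, hm0⟩ := hM.1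
  refine ⟨⟨x, m0, hm0, inf_le_right⟩, ?_, ?_⟩
  · rintro u v ⟨m, hm, hmu⟩ huv
    exact ⟨m, hm, hmu.trans huv⟩
  · rintro u v ⟨m1, hm1, h1⟩ ⟨m2, hm2, h2⟩
    refine ⟨m1 ⊓ m2, hM.2.2 _ _ hm1 hm2, le_inf ?_ ?_⟩
    · exact le_trans (inf_le_inf_right x inf_le_left) h1
    · exact le_trans (inf_le_inf_right x inf_le_right) h2

lemma gen_filter_subset {L : Type*} [Lattice L] {M : Set L} (x : L) :
    M ⊆ {z | ∃ m ∈ M, m ⊓ x ≤ z} := fun m hm => ⟨m, hm, inf_le_left⟩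

lemma gen_filter_mem {L : Type*} [Lattice L] {M : Set L} (hM : IsLatFilter M) (x : L) :
    x ∈ {z | ∃ m ∈ M, m ⊓ x ≤ z} := by
  obtain ⟨m0, hm0⟩ := hM.1
  exact ⟨m0, hm0, inf_le_right⟩

/-- Prime filter separation in a distributive lattice. -/
lemma prime_filter_sep {L : Type*} [DistribLattice L] {F : Set L} (hF : IsLatFilter F)
    {b : L} (hb : b ∉ F) : ∃ P : Set L, IsPrimeLatFilter P ∧ F ⊆ P ∧ b ∉ P := by
  set S : Set (Set L) := {P | IsLatFilter P ∧ b ∉ P} with hS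
  obtain ⟨M, hFM, hMS, hmax⟩ := zorn_subset_nonempty S
    (fun c hc hchain hne =>
      ⟨⋃₀ c, ⟨chain_union_filter hchain hne (fun P hP => (hc hP).1),
        by rintro ⟨P, hP, hbP⟩; exact (hc hP).2 hbP⟩,
       fun s hs => Set.subset_sUnion_of_mem hs⟩)
    F ⟨hF, hb⟩
  refine ⟨M, ⟨hMS.1, ?_, ?_⟩, hFM, hMS.2⟩
  · intro h; exact hMS.2 (h ▸ Set.mem_univ b)
  · intro x y hxy
    by_contra hcon
    push_neg at hcon
    obtain ⟨hx, hy⟩ := hcon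
    have key : ∀ w : L, w ∉ M → w ⊔ (x ⊔ y) = x ⊔ y → ∃ m ∈ M, m ⊓ w ≤ b := by
      intro w hw _
      by_contra hnb
      push_neg at hnb
      have hMw : {z | ∃ m ∈ M, m ⊓ w ≤ z} ∈ S := by
        refine ⟨gen_filter hMS.1 w, ?_⟩
        rintro ⟨m, hm, hmb⟩
        exact (hnb m hm) hmb
      have := hmax hMw (gen_filter_subset w)
      exact hw (this (gen_filter_mem hMS.1 w))
    obtain ⟨m1, hm1, h1⟩ := key x hx (sup_assoc x x y ▸ by rw [sup_idem])
    obtain ⟨m2, hm2, h2⟩ := key y hy (by rw [sup_left_comm, sup_idem])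
    have hm : m1 ⊓ m2 ∈ M := hMS.1.2.2 _ _ hm1 hm2
    have hmem : (m1 ⊓ m2) ⊓ (x ⊔ y) ∈ M := hMS.1.2.2 _ _ hm hxy
    have hle : (m1 ⊓ m2) ⊓ (x ⊔ y) ≤ b := by
      rw [inf_sup_left]
      exact sup_le (le_trans (inf_le_inf_right x inf_le_left) h1)
        (le_trans (inf_le_inf_right y inf_le_right) h2)
    exact hMS.2 (hMS.1.2.1 _ _ hmem hle)

/-- Prime extension lemma for products. -/
lemma prime_ext {G H : Set B} (hG : IsPrimeLatFilter G) (hH : IsPrimeLatFilter H)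
    {a : B} (ha : ∀ y ∈ G, a * y ∈ H) :
    ∃ F : Set B, IsPrimeLatFilter F ∧ a ∈ F ∧ ∀ x ∈ F, ∀ y ∈ G, x * y ∈ H := by
  have hbotH : (⊥ : B) ∉ H := by
    intro hbot
    exact hH.2.1 (Set.eq_univ_of_forall fun z => hH.1.2.1 _ _ hbot bot_le)
  set S : Set (Set B) := {F | IsLatFilter F ∧ ∀ x ∈ F, ∀ y ∈ G, x * y ∈ H} with hS
  have hIci : Set.Ici a ∈ S := by
    refine ⟨⟨⟨a, le_rfl⟩, fun u v hu huv => hu.trans huv,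
      fun u v hu hv => le_inf hu hv⟩, ?_⟩
    intro x hx y hy
    exact hH.1.2.1 _ _ (ha y hy) (mul_le_mul' hx le_rfl)
  obtain ⟨M, haM, hMS, hmax⟩ := zorn_subset_nonempty S
    (fun c hc hchain hne =>
      ⟨⋃₀ c, ⟨chain_union_filter hchain hne (fun P hP => (hc hP).1),
        by rintro x ⟨P, hP, hxP⟩ y hy; exact (hc hP).2 x hxP y hy⟩,
       fun s hs => Set.subset_sUnion_of_mem hs⟩)
    (Set.Ici a) hIci
  obtain ⟨g0, hg0⟩ := hG.1.1
  refine ⟨M, ⟨hMS.1, ?_, ?_⟩, haM le_rfl, hMS.2⟩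
  · intro h
    have : (⊥ : B) ∈ M := h ▸ Set.mem_univ _
    have := hMS.2 ⊥ this g0 hg0
    rw [bot_mul'] at this
    exact hbotH this
  · intro x y hxy
    by_contra hcon
    push_neg at hcon
    obtain ⟨hx, hy⟩ := hcon
    have key : ∀ w : B, w ∉ M → ∃ m ∈ M, ∃ g ∈ G, (m ⊓ w) * g ∉ H := by
      intro w hw
      by_contra hnb
      push_neg at hnb
      have hMw : {z | ∃ m ∈ M, m ⊓ w ≤ z} ∈ S := by
        refine ⟨gen_filter hMS.1 w, ?_⟩
        rintro z ⟨m, hm, hmz⟩ g hg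
        exact hH.1.2.1 _ _ (hnb m hm g hg) (mul_le_mul' hmz le_rfl)
      have := hmax hMw (gen_filter_subset w)
      exact hw (this (gen_filter_mem hMS.1 w))
    obtain ⟨m1, hm1, g1, hg1, h1⟩ := key x hx
    obtain ⟨m2, hm2, g2, hg2, h2⟩ := key y hy
    have hm : m1 ⊓ m2 ∈ M := hMS.1.2.2 _ _ hm1 hm2
    have hg : g1 ⊓ g2 ∈ G := hG.1.2.2 _ _ hg1 hg2
    have hmem : ((m1 ⊓ m2) ⊓ (x ⊔ y)) * (g1 ⊓ g2) ∈ H :=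
      hMS.2 _ (hMS.1.2.2 _ _ hm hxy) _ hg
    rw [inf_sup_left, sup_mul'] at hmem
    rcases hH.2.2 _ _ hmem with h | h
    · exact h1 (hH.1.2.1 _ _ h (mul_le_mul'
        (inf_le_inf_right x inf_le_left) inf_le_left))
    · exact h2 (hH.1.2.1 _ _ h (mul_le_mul'
        (inf_le_inf_right y inf_le_right) inf_le_right))

end RBAProof


theorem r_exist_ldiv {B : Type*} [ResiduatedBooleanAlgebra B]
    (G : Set B) (hG : IsPrimeLatFilter G) (a b : B)
    (hab : ResiduatedBooleanAlgebra.ldiv a b ∉ G) :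
    ∃ F H : Set B, IsPrimeLatFilter F ∧ IsPrimeLatFilter H ∧ a ∈ F ∧ b ∉ H ∧
      ∀ x ∈ F, ∀ y ∈ G, x * y ∈ H := by
  classical
  obtain ⟨g0, hg0⟩ := hG.1.1
  -- the filter generated by {a * x : x ∈ G}
  set H0 : Set B := {z | ∃ x ∈ G, a * x ≤ z} with hH0
  have hH0filter : IsLatFilter H0 := by
    refine ⟨⟨a * g0, g0, hg0, le_rfl⟩, ?_, ?_⟩
    · rintro u v ⟨x, hx, hux⟩ huv
      exact ⟨x, hx, hux.trans huv⟩
    · rintro u v ⟨x1, hx1, h1⟩ ⟨x2, hx2, h2⟩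
      refine ⟨x1 ⊓ x2, hG.1.2.2 _ _ hx1 hx2, le_inf ?_ ?_⟩
      · exact le_trans (RBAProof.mul_le_mul' le_rfl inf_le_left) h1
      · exact le_trans (RBAProof.mul_le_mul' le_rfl inf_le_right) h2
  have hbH0 : b ∉ H0 := by
    rintro ⟨x, hx, hxb⟩
    exact hab (hG.1.2.1 _ _ hx ((ResiduatedBooleanAlgebra.res_ldiv a x b).mp hxb))
  obtain ⟨H, hHprime, hH0H, hbH⟩ := RBAProof.prime_filter_sep hH0filter hbH0
  have ha : ∀ y ∈ G, a * y ∈ H := fun y hy => hH0H ⟨y, hy, le_rfl⟩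
  obtain ⟨F, hFprime, haF, hFH⟩ := RBAProof.prime_ext hG hHprime ha
  exact ⟨F, H, hFprime, hHprime, haF, hbH, hFH⟩
end

section
/- Let B be a residuated Boolean algebra, ℱ(B) its prime filters, and define R(F,G,H) iff for all a,b: a ∈ F and b ∈ G imply a ⊗ b ∈ H. Define on subsets of ℱ(B): X ⊗' Y = { H : ∃F∈X, G∈Y, R(F,G,H) }. Then the Stone map ι(a) = { F : a ∈ F } satisfies ι(a ⊗ b) = ι(a) ⊗' ι(b) for all a, b ∈ B. -/
/-- The relation `R(F,G,H)` of the associated residuated frame. -/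
def FrameR {B : Type*} [ResiduatedBooleanAlgebra B] (F G H : Set B) : Prop :=
  ∀ a b : B, a ∈ F → b ∈ G → a * b ∈ H

namespace RBAaux

open ResiduatedBooleanAlgebra

variable {B : Type*} [ResiduatedBooleanAlgebra B]

lemma rba_mul_le_mul {a a' b b' : B} (h1 : a ≤ a') (h2 : b ≤ b') : a * b ≤ a' * b' := by
  have h3 : a * b ≤ a' * b :=
    (res_rdiv a b (a' * b)).mpr (h1.trans ((res_rdiv a' b (a' * b)).mp le_rfl))
  have h4 : a' * b ≤ a' * b' :=
    (res_ldiv a' b (a' * b')).mpr (h2.trans ((res_ldiv a' b' (a' * b')).mp le_rfl))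
  exact h3.trans h4

lemma rba_mul_sup_right (f x y : B) : f * (x ⊔ y) = f * x ⊔ f * y := by
  apply le_antisymm
  · rw [res_ldiv]
    exact sup_le ((res_ldiv _ _ _).mp le_sup_left) ((res_ldiv _ _ _).mp le_sup_right)
  · exact sup_le (rba_mul_le_mul le_rfl le_sup_left) (rba_mul_le_mul le_rfl le_sup_right)

lemma rba_bot_mul (x : B) : (⊥ : B) * x = ⊥ :=
  le_antisymm ((res_rdiv _ _ _).mpr bot_le) bot_le

lemma rba_mul_bot (x : B) : x * (⊥ : B) = ⊥ :=
  le_antisymm ((res_ldiv _ _ _).mpr bot_le) bot_le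

/-- The key extension lemma, proved by Zorn's lemma: given a prime filter `H` and a
nonempty, downward-directed family `T` of monotone, join-preserving, bot-preserving maps
with `t a ∈ H` for all `t ∈ T`, there is a prime filter `F ∋ a` with `t f ∈ H` for
all `f ∈ F`, `t ∈ T`. -/
lemma prime_extension (H : Set B) (hH : IsPrimeLatFilter H)
    (T : Set (B → B)) (hTne : T.Nonempty)
    (hmono : ∀ t ∈ T, Monotone t)
    (hsup : ∀ t ∈ T, ∀ x y : B, t (x ⊔ y) = t x ⊔ t y)
    (hbot : ∀ t ∈ T, t ⊥ = ⊥)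
    (hdir : ∀ t ∈ T, ∀ s ∈ T, ∃ r ∈ T, ∀ x : B, r x ≤ t x ∧ r x ≤ s x)
    (a : B) (ha : ∀ t ∈ T, t a ∈ H) :
    ∃ F : Set B, IsPrimeLatFilter F ∧ a ∈ F ∧ ∀ f ∈ F, ∀ t ∈ T, t f ∈ H := by
  obtain ⟨⟨hHne, hHup, hHinf⟩, hHproper, hHprime⟩ := hH
  have hbotH : (⊥ : B) ∉ H := by
    intro hb
    exact hHproper (Set.eq_univ_of_forall fun z => hHup ⊥ z hb bot_le)
  set S : Set (Set B) := {F | IsLatFilter F ∧ a ∈ F ∧ ∀ f ∈ F, ∀ t ∈ T, t f ∈ H} with hS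
  have hstart : {z : B | a ≤ z} ∈ S := by
    refine ⟨⟨⟨a, le_rfl⟩, fun x y hx hxy => le_trans hx hxy,
      fun x y hx hy => le_inf hx hy⟩, le_rfl, ?_⟩
    intro f hf t ht
    exact hHup _ _ (ha t ht) (hmono t ht hf)
  obtain ⟨F, -, ⟨⟨⟨hFne, hFup, hFinf⟩, haF, hFcond⟩, hFmax⟩⟩ :=
    zorn_subset_nonempty S (fun c hcS hc hcne => by
      refine ⟨⋃₀ c, ⟨⟨?_, ?_, ?_⟩, ?_, ?_⟩, fun s hs => Set.subset_sUnion_of_mem hs⟩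
      · obtain ⟨s, hs⟩ := hcne
        obtain ⟨x, hx⟩ := (hcS hs).1.1
        exact ⟨x, s, hs, hx⟩
      · rintro x y ⟨s, hs, hx⟩ hxy
        exact ⟨s, hs, (hcS hs).1.2.1 x y hx hxy⟩
      · rintro x y ⟨s, hs, hx⟩ ⟨u, hu, hy⟩
        rcases hc.total hs hu with h | h
        · exact ⟨u, hu, (hcS hu).1.2.2 x y (h hx) hy⟩
        · exact ⟨s, hs, (hcS hs).1.2.2 x y hx (h hy)⟩
      · obtain ⟨s, hs⟩ := hcne
        exact ⟨s, hs, (hcS hs).2.1⟩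
      · rintro f ⟨s, hs, hf⟩ t ht
        exact (hcS hs).2.2 f hf t ht) _ hstart
  refine ⟨F, ⟨⟨hFne, hFup, hFinf⟩, ?_, ?_⟩, haF, hFcond⟩
  · -- properness
    intro heq
    obtain ⟨t, ht⟩ := hTne
    have : t ⊥ ∈ H := hFcond ⊥ (heq ▸ Set.mem_univ _) t ht
    rw [hbot t ht] at this
    exact hbotH this
  · -- primeness
    intro x y hxy
    by_contra hcon
    push_neg at hcon
    obtain ⟨hx, hy⟩ := hcon
    -- the filter generated by F and z fails the condition, for z = x and z = y
    have key : ∀ z : B, z ∉ F → x ⊔ y ∈ F → ∃ f ∈ F, ∃ t ∈ T, t (f ⊓ z) ∉ H := by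
      intro z hz _
      by_contra hk
      push_neg at hk
      have hFz : {w : B | ∃ f ∈ F, f ⊓ z ≤ w} ∈ S := by
        refine ⟨⟨?_, ?_, ?_⟩, ?_, ?_⟩
        · obtain ⟨f, hf⟩ := hFne
          exact ⟨f ⊓ z, f, hf, le_rfl⟩
        · rintro u v ⟨f, hf, hu⟩ huv
          exact ⟨f, hf, hu.trans huv⟩
        · rintro u v ⟨f, hf, hu⟩ ⟨g, hg, hv⟩
          exact ⟨f ⊓ g, hFinf f g hf hg, le_inf
            (le_trans (inf_le_inf inf_le_left le_rfl) hu)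
            (le_trans (inf_le_inf inf_le_right le_rfl) hv)⟩
        · exact ⟨a, haF, inf_le_left⟩
        · rintro w ⟨f, hf, hw⟩ t ht
          exact hHup _ _ (hk f hf t ht) (hmono t ht hw)
      have hsub : F ⊆ {w : B | ∃ f ∈ F, f ⊓ z ≤ w} := fun f hf => ⟨f, hf, inf_le_left⟩
      have := Set.Subset.antisymm hsub (hFmax hFz hsub)
      apply hz
      rw [this]
      obtain ⟨f, hf⟩ := hFne
      exact ⟨f, hf, inf_le_right⟩
    obtain ⟨f, hf, t, ht, hft⟩ := key x hx hxy
    obtain ⟨g, hg, s, hs, hgs⟩ := key y hy hxy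
    obtain ⟨r, hr, hrle⟩ := hdir t ht s hs
    set h := f ⊓ g with hh
    have hhF : h ∈ F := hFinf f g hf hg
    have h1 : r (h ⊓ x) ∉ H := fun hmem =>
      hft (hHup _ _ hmem (le_trans ((hrle _).1.trans (hmono t ht
        (inf_le_inf inf_le_left le_rfl))) le_rfl))
    have h2 : r (h ⊓ y) ∉ H := fun hmem =>
      hgs (hHup _ _ hmem ((hrle _).2.trans (hmono s hs
        (inf_le_inf inf_le_right le_rfl))))
    have h3 : r (h ⊓ (x ⊔ y)) ∈ H := hFcond _ (hFinf h (x ⊔ y) hhF hxy) r hr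
    rw [inf_sup_left, hsup r hr] at h3
    rcases hHprime _ _ h3 with h4 | h4
    · exact h1 h4
    · exact h2 h4

end RBAaux

theorem stone_map_mul {B : Type*} [ResiduatedBooleanAlgebra B] (a b : B) :
    {H : Set B | IsPrimeLatFilter H ∧ a * b ∈ H} =
      {H : Set B | IsPrimeLatFilter H ∧
        ∃ F ∈ {F : Set B | IsPrimeLatFilter F ∧ a ∈ F},
          ∃ G ∈ {G : Set B | IsPrimeLatFilter G ∧ b ∈ G}, FrameR F G H} := by
  open RBAaux in
  ext H
  simp only [Set.mem_setOf_eq]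
  constructor
  · rintro ⟨hH, hab⟩
    refine ⟨hH, ?_⟩
    -- first: a prime filter F ∋ a with f * b ∈ H for all f ∈ F
    obtain ⟨F, hF, haF, hFcond⟩ := RBAaux.prime_extension H hH {fun x => x * b}
      ⟨_, rfl⟩
      (by rintro t rfl u v huv; exact RBAaux.rba_mul_le_mul huv le_rfl)
      (by rintro t rfl x y
          apply le_antisymm
          · rw [ResiduatedBooleanAlgebra.res_rdiv]
            exact sup_le ((ResiduatedBooleanAlgebra.res_rdiv _ _ _).mp le_sup_left)
              ((ResiduatedBooleanAlgebra.res_rdiv _ _ _).mp le_sup_right)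
          · exact sup_le (RBAaux.rba_mul_le_mul le_sup_left le_rfl)
              (RBAaux.rba_mul_le_mul le_sup_right le_rfl))
      (by rintro t rfl; exact RBAaux.rba_bot_mul b)
      (by rintro t rfl s rfl; exact ⟨_, rfl, fun x => ⟨le_rfl, le_rfl⟩⟩)
      a (by rintro t rfl; exact hab)
    -- second: a prime filter G ∋ b with f * g ∈ H for all f ∈ F, g ∈ G
    obtain ⟨G, hG, hbG, hGcond⟩ := RBAaux.prime_extension H hH
      ((fun f => fun y => f * y) '' F)
      (hF.1.1.image _)
      (by rintro t ⟨f, hf, rfl⟩ u v huv; exact RBAaux.rba_mul_le_mul le_rfl huv)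
      (by rintro t ⟨f, hf, rfl⟩ x y; exact RBAaux.rba_mul_sup_right f x y)
      (by rintro t ⟨f, hf, rfl⟩; exact RBAaux.rba_mul_bot f)
      (by rintro t ⟨f, hf, rfl⟩ s ⟨g, hg, rfl⟩
          exact ⟨_, ⟨f ⊓ g, hF.1.2.2 f g hf hg, rfl⟩,
            fun x => ⟨RBAaux.rba_mul_le_mul inf_le_left le_rfl,
              RBAaux.rba_mul_le_mul inf_le_right le_rfl⟩⟩)
      b (by rintro t ⟨f, hf, rfl⟩; exact hFcond f hf _ rfl)
    refine ⟨F, ⟨hF, haF⟩, G, ⟨hG, hbG⟩, ?_⟩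
    intro x y hx hy
    exact hGcond y hy _ ⟨x, hx, rfl⟩
  · rintro ⟨hH, F, ⟨hF, haF⟩, G, ⟨hG, hbG⟩, hR⟩
    exact ⟨hH, hR a b haF hbG⟩
end

section
/- Let B be a residuated Boolean algebra, F, H prime filters and G a prime filter containing 1 such that a ∈ F and b ∈ G imply a ⊗ b ∈ H for all a, b. Then F = H. -/
theorem unit_filter_eq {B : Type*} [ResiduatedBooleanAlgebra B]
    (F G H : Set B) (hF : IsPrimeLatFilter F) (hG : IsPrimeLatFilter G)
    (hH : IsPrimeLatFilter H) (h1 : (1 : B) ∈ G)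
    (hR : ∀ a b : B, a ∈ F → b ∈ G → a * b ∈ H) :
    F = H := by
  obtain ⟨⟨⟨f0, hf0⟩, hFup, hFmeet⟩, hFprop, hFprime⟩ := hF
  obtain ⟨⟨_, hHup, hHmeet⟩, hHprop, _⟩ := hH
  have hFH : ∀ a : B, a ∈ F → a ∈ H := fun a ha => by
    have := hR a 1 ha h1
    rwa [ResiduatedBooleanAlgebra.mul_one] at this
  apply Set.eq_of_subset_of_subset hFH
  intro a ha
  by_contra hna
  have htop : (⊤ : B) ∈ F := hFup f0 ⊤ hf0 le_top
  have : a ⊔ aᶜ ∈ F := by rwa [sup_compl_eq_top]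
  rcases hFprime a aᶜ this with h | h
  · exact hna h
  · have hac : aᶜ ∈ H := hFH aᶜ h
    have hbot : (⊥ : B) ∈ H := by
      have := hHmeet a aᶜ ha hac
      rwa [inf_compl_eq_bot] at this
    exact hHprop (Set.eq_univ_of_forall fun x => hHup ⊥ x hbot bot_le)
end

section
/- The set of prime filters of a residuated Boolean algebra B, with I the set of prime filters containing 1 and R(F,G,H) defined by 'a ∈ F and b ∈ G imply a ⊗ b ∈ H for all a, b', satisfies frame condition (U5): for all prime filters F, H and G ∈ I, if R(F,G,H) or R(G,F,H) then F = H. -/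
lemma top_mem_prime {L : Type*} [Lattice L] [OrderTop L] {F : Set L}
    (hF : IsPrimeLatFilter F) : ⊤ ∈ F := by
  obtain ⟨⟨⟨a, ha⟩, hup, _⟩, _, _⟩ := hF
  exact hup a ⊤ ha le_top

lemma compl_cases {B : Type*} [BooleanAlgebra B] {F : Set B}
    (hF : IsPrimeLatFilter F) (a : B) : a ∈ F ∨ aᶜ ∈ F := by
  apply hF.2.2 a aᶜ
  rw [sup_compl_eq_top]
  exact top_mem_prime hF

theorem frame_U5 {B : Type*} [ResiduatedBooleanAlgebra B]
    (F G H : Set B) (hF : IsPrimeLatFilter F) (hG : IsPrimeLatFilter G)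
    (hH : IsPrimeLatFilter H) (h1 : (1 : B) ∈ G)
    (hR : (∀ a b : B, a ∈ F → b ∈ G → a * b ∈ H) ∨
          (∀ a b : B, a ∈ G → b ∈ F → a * b ∈ H)) :
    F = H := by
  have hsub : ∀ a : B, a ∈ F → a ∈ H := by
    intro a ha
    rcases hR with hR | hR
    · have := hR a 1 ha h1
      rwa [ResiduatedBooleanAlgebra.mul_one] at this
    · have := hR 1 a h1 ha
      rwa [ResiduatedBooleanAlgebra.one_mul] at this
  ext a
  constructor
  · exact hsub a
  · intro haH
    by_contra haF
    rcases compl_cases hF a with h | h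
    · exact haF h
    · have hcH : aᶜ ∈ H := hsub _ h
      have hbot : (⊥ : B) ∈ H := by
        have := hH.1.2.2 a aᶜ haH hcH
        rwa [inf_compl_eq_bot] at this
      apply hH.2.1
      ext x
      simp only [Set.mem_univ, iff_true]
      exact hH.1.2.1 ⊥ x hbot bot_le
end
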